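/- arXiv:1910.12486 — 2 statements merged into one kernel-verified Lean document; each statement's English description precedes it below -/
import Mathlib

section
/- (Lower RSS bound, from the proof of Lemma C.2.) Let x_t = f_t + ε_t for t = 1, …, n, where f is constant on each segment of the partition of {1, …, n} induced by a set Θ ⊆ {1, …, n−1} (i.e., f_t = f_{t+1} whenever t ∉ Θ). Suppose ε satisfies the uniform interval bound with level ω > 0. Then for every A ⊆ {1, …, n−1}, RSS(A; x) ≥ ∑_{t=1}^{n} ε_t² − (|A ∪ Θ| + 1) · ω². -/
open Finset

/-- Mean of `x` over the interval `(s, e]`. -/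
noncomputable def segMean (x : ℕ → ℝ) (s e : ℕ) : ℝ :=
  (∑ t ∈ Finset.Ioc s e, x t) / ((e : ℝ) - (s : ℝ))

/-- CUSUM statistic of `x` at split point `b` on the interval `(s, e]`. -/
noncomputable def cusum (x : ℕ → ℝ) (s b e : ℕ) : ℝ :=
  Real.sqrt (((b : ℝ) - s) * ((e : ℝ) - b) / ((e : ℝ) - s)) *
    (segMean x s b - segMean x b e)

/-- Largest element of `A ∪ {0}` that is `< t`. -/
def lbd (A : Finset ℕ) (t : ℕ) : ℕ :=
  WithBot.unbotD 0 ((insert 0 A).filter (fun a => a < t)).max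

/-- Smallest element of `A ∪ {n}` that is `≥ t`. -/
def ubd (A : Finset ℕ) (n t : ℕ) : ℕ :=
  WithTop.untopD n (((insert n A).filter (fun a => t ≤ a)).min)

/-- Residual sum of squares of `x_1, …, x_n` with respect to the segmentation
of `{1, …, n}` induced by the set of change point candidates `A`:
each `t` lies in the segment `(lbd A t, ubd A n t]`. -/
noncomputable def RSS (x : ℕ → ℝ) (n : ℕ) (A : Finset ℕ) : ℝ :=
  ∑ t ∈ Finset.Icc 1 n, (x t - segMean x (lbd A t) (ubd A n t)) ^ 2

/-- Schwarz criterion with penalty `ξ`. -/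
noncomputable def SC (x : ℕ → ℝ) (n : ℕ) (ξ : ℝ) (A : Finset ℕ) : ℝ :=
  ((n : ℝ) / 2) * Real.log (RSS x n A / n) + (A.card : ℝ) * ξ

/-- `ε_1, …, ε_n` satisfies the uniform interval bound with level `ω`:
`|∑_{t=s+1}^e ε_t| ≤ ω √(e − s)` for all `0 ≤ s < e ≤ n`. -/
def UIB (ε : ℕ → ℝ) (n : ℕ) (ω : ℝ) : Prop :=
  ∀ s e : ℕ, s < e → e ≤ n →
    |∑ t ∈ Finset.Ioc s e, ε t| ≤ ω * Real.sqrt ((e : ℝ) - s)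


lemma lbd_spec (A : Finset ℕ) (t : ℕ) (ht : 1 ≤ t) :
    lbd A t ∈ insert 0 A ∧ lbd A t < t ∧
      ∀ a ∈ insert 0 A, a < t → a ≤ lbd A t := by
  classical
  set F := (insert 0 A).filter (fun a => a < t) with hF
  have h0 : (0:ℕ) ∈ F := by simp [hF]; omega
  have hne : F.Nonempty := ⟨0, h0⟩
  have hval : lbd A t = F.max' hne := by
    simp only [lbd, ← hF, ← Finset.coe_max' hne, WithBot.unbotD_coe]
  have hmem := Finset.mem_filter.1 (F.max'_mem hne)
  refine ⟨hval ▸ hmem.1, hval ▸ hmem.2, fun a ha hat => ?_⟩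
  rw [hval]
  exact F.le_max' a (by simp [hF, ha, hat])

lemma ubd_spec (B : Finset ℕ) (n t : ℕ) (ht : t ≤ n) :
    t ≤ ubd B n t ∧ ubd B n t ∈ insert n B ∧
      ∀ a ∈ insert n B, t ≤ a → ubd B n t ≤ a := by
  classical
  set F := (insert n B).filter (fun a => t ≤ a) with hF
  have hnF : n ∈ F := by simp [hF, ht]
  have hne : F.Nonempty := ⟨n, hnF⟩
  have hval : ubd B n t = F.min' hne := by
    simp only [ubd, ← hF, ← Finset.coe_min' hne, WithTop.untopD_coe]
  have hmem := Finset.mem_filter.1 (F.min'_mem hne)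
  refine ⟨hval ▸ hmem.2, hval ▸ hmem.1, fun a ha hta => ?_⟩
  rw [hval]
  exact F.min'_le a (by simp [hF, ha, hta])

lemma seg_lbd_eq (A B : Finset ℕ) (hAB : A ⊆ B) (n s t : ℕ)
    (hs : s ∈ insert 0 B) (hsn : s + 1 ≤ n) (hst : s < t) (hte : t ≤ ubd B n (s+1)) :
    lbd A t = lbd A (s+1) := by
  obtain ⟨h1, h2, h3⟩ := ubd_spec B n (s+1) hsn
  have key : ∀ u, s < u → u ≤ ubd B n (s+1) →
      (insert 0 A).filter (fun a => a < u) = (insert 0 A).filter (fun a => a ≤ s) := by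
    intro u hsu hue
    ext a
    simp only [Finset.mem_filter, Finset.mem_insert, and_congr_right_iff]
    rintro (ha | ha)
    · omega
    · constructor
      · intro hau
        by_contra hcon
        have haB : a ∈ insert n B := Finset.mem_insert_of_mem (hAB ha)
        have := h3 a haB (by omega)
        omega
      · intro; omega
  simp only [lbd]
  rw [key t hst hte, key (s+1) (by omega) h1]

lemma seg_ubd_eq (A B : Finset ℕ) (hAB : A ⊆ B) (n s t : ℕ)
    (hs : s ∈ insert 0 B) (hsn : s + 1 ≤ n) (hst : s < t) (hte : t ≤ ubd B n (s+1)) :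
    ubd A n t = ubd A n (s+1) := by
  obtain ⟨h1, h2, h3⟩ := ubd_spec B n (s+1) hsn
  have hub : ubd B n (s+1) ≤ n := h3 n (Finset.mem_insert_self n _) hsn
  have key : ∀ u, s < u → u ≤ ubd B n (s+1) →
      (insert n A).filter (fun a => u ≤ a) = (insert n A).filter (fun a => s < a) := by
    intro u hsu hue
    ext a
    simp only [Finset.mem_filter, Finset.mem_insert, and_congr_right_iff]
    rintro (ha | ha)
    · omega
    · constructor
      · intro; omega
      · intro hsa
        have := h3 a (Finset.mem_insert_of_mem (hAB ha)) (by omega)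
        omega
  simp only [ubd]
  rw [key t hst hte, key (s+1) (by omega) h1]

lemma sum_partition (B : Finset ℕ) (n : ℕ) (hn : 1 ≤ n)
    (hB : B ⊆ Finset.Icc 1 (n-1)) (g : ℕ → ℝ) :
    ∑ t ∈ Finset.Icc 1 n, g t
      = ∑ s ∈ insert 0 B, ∑ t ∈ Finset.Ioc s (ubd B n (s+1)), g t := by
  classical
  have hsn : ∀ s ∈ insert 0 B, s + 1 ≤ n := by
    intro s hs
    rcases Finset.mem_insert.1 hs with h | h
    · omega
    · have := hB h; simp [Finset.mem_Icc] at this; omega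
  have hset : Finset.Icc 1 n
      = (insert 0 B).biUnion (fun s => Finset.Ioc s (ubd B n (s+1))) := by
    ext t
    simp only [Finset.mem_biUnion, Finset.mem_Icc, Finset.mem_Ioc]
    constructor
    · rintro ⟨ht1, htn⟩
      obtain ⟨hsm, hst, hmax⟩ := lbd_spec B t ht1
      refine ⟨lbd B t, hsm, hst, ?_⟩
      obtain ⟨h1, h2, h3⟩ := ubd_spec B n (lbd B t + 1) (hsn _ hsm)
      by_contra hcon
      push_neg at hcon
      have hmem : ubd B n (lbd B t + 1) ∈ insert 0 B := by
        rcases Finset.mem_insert.1 h2 with h | h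
        · omega
        · exact Finset.mem_insert_of_mem h
      have := hmax _ hmem hcon
      omega
    · rintro ⟨s, hs, hst, hte⟩
      obtain ⟨h1, h2, h3⟩ := ubd_spec B n (s+1) (hsn s hs)
      have := h3 n (Finset.mem_insert_self n B) (hsn s hs)
      omega
  have hdisj : ((insert 0 B : Finset ℕ) : Set ℕ).PairwiseDisjoint
      (fun s => Finset.Ioc s (ubd B n (s+1))) := by
    have key : ∀ u v : ℕ, u ∈ insert 0 B → v ∈ insert 0 B → u < v →
        ubd B n (u+1) ≤ v := by
      intro u v hu hv huv
      obtain ⟨h1, h2, h3⟩ := ubd_spec B n (u+1) (hsn u hu)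
      rcases Finset.mem_insert.1 hv with h | h
      · have := h3 n (Finset.mem_insert_self n B) (hsn u hu); omega
      · exact h3 v (Finset.mem_insert_of_mem h) (by omega)
    intro s hs s' hs' hne
    simp only [Finset.mem_coe] at hs hs'
    apply Finset.disjoint_left.2
    intro t ht ht'
    simp only [Finset.mem_Ioc] at ht ht'
    rcases lt_trichotomy s s' with h | h | h
    · have := key s s' hs hs' h; omega
    · exact hne h
    · have := key s' s hs' hs h; omega
  rw [hset, Finset.sum_biUnion hdisj]

/-- Lower RSS bound (proof of Lemma C.2): if `x = f + ε` with `f` constant on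
the segments induced by `Θ` and `ε` satisfying the uniform interval bound with
level `ω`, then for any candidate set `A`,
`RSS(A; x) ≥ ∑_{t=1}^n ε_t² − (|A ∪ Θ| + 1) ω²`. -/
theorem rss_lower_bound
    (n : ℕ) (hn : 1 ≤ n) (f ε x : ℕ → ℝ) (hx : ∀ t, x t = f t + ε t)
    (Θ : Finset ℕ) (hΘ : Θ ⊆ Finset.Icc 1 (n - 1))
    (hf : ∀ t : ℕ, 1 ≤ t → t < n → t ∉ Θ → f t = f (t + 1))
    (ω : ℝ) (hω : 0 < ω) (hε : UIB ε n ω)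
    (A : Finset ℕ) (hA : A ⊆ Finset.Icc 1 (n - 1)) :
    (∑ t ∈ Finset.Icc 1 n, (ε t) ^ 2) - (((A ∪ Θ).card : ℝ) + 1) * ω ^ 2
      ≤ RSS x n A := by
  classical
  set B := A ∪ Θ with hBdef
  have hAB : A ⊆ B := Finset.subset_union_left
  have hBsub : B ⊆ Finset.Icc 1 (n-1) := Finset.union_subset hA hΘ
  have h0B : (0:ℕ) ∉ B := by
    intro h; have := hBsub h; simp [Finset.mem_Icc] at this
  have hsn : ∀ s ∈ insert 0 B, s + 1 ≤ n := by
    intro s hs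
    rcases Finset.mem_insert.1 hs with h | h
    · omega
    · have := hBsub h; simp [Finset.mem_Icc] at this; omega
  have hseg : ∀ s ∈ insert 0 B,
      (∑ t ∈ Finset.Ioc s (ubd B n (s+1)), ε t ^ 2) - ω ^ 2
        ≤ ∑ t ∈ Finset.Ioc s (ubd B n (s+1)),
            (x t - segMean x (lbd A t) (ubd A n t)) ^ 2 := by
    intro s hs
    have hsn' : s + 1 ≤ n := hsn s hs
    obtain ⟨h1, h2, h3⟩ := ubd_spec B n (s+1) hsn'
    set e := ubd B n (s+1) with he
    have hen : e ≤ n := h3 n (Finset.mem_insert_self n B) hsn'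
    have hse : s < e := by omega
    set c := segMean x (lbd A (s+1)) (ubd A n (s+1)) with hc
    have hconst : ∀ t ∈ Finset.Ioc s e, segMean x (lbd A t) (ubd A n t) = c := by
      intro t ht
      rw [Finset.mem_Ioc] at ht
      rw [seg_lbd_eq A B hAB n s t hs hsn' ht.1 ht.2,
          seg_ubd_eq A B hAB n s t hs hsn' ht.1 ht.2]
    have hfc : ∀ t ∈ Finset.Ioc s e, f t = f (s+1) := by
      have key : ∀ t, s+1 ≤ t → t ≤ e → f t = f (s+1) := by
        intro t
        induction t with
        | zero => omega
        | succ k ih =>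
          intro hk1 hk2
          rcases Nat.lt_or_ge (s+1) (k+1) with h | h
          · have hfk : f k = f (s+1) := ih (by omega) (by omega)
            have hknΘ : k ∉ Θ := by
              intro hkΘ
              have hkB : k ∈ B := Finset.mem_union_right _ hkΘ
              have := h3 k (Finset.mem_insert_of_mem hkB) (by omega)
              omega
            rw [← hf k (by omega) (by omega) hknΘ, hfk]
          · have hk : k + 1 = s + 1 := by omega
            rw [hk]
      intro t ht; rw [Finset.mem_Ioc] at ht; exact key t (by omega) ht.2
    set m : ℝ := (e : ℝ) - (s : ℝ) with hm
    have hm0 : (0:ℝ) < m := by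
      rw [hm]
      have : (s:ℝ) < e := by exact_mod_cast hse
      linarith
    have hmne : m ≠ 0 := hm0.ne'
    have hcardJ : (((Finset.Ioc s e).card : ℝ)) = m := by
      rw [Nat.card_Ioc, hm, Nat.cast_sub hse.le]
    set S := ∑ t ∈ Finset.Ioc s e, ε t with hS
    have hS2 : S^2 ≤ ω^2 * m := by
      have h := hε s e hse hen
      rw [← hS, ← hm] at h
      calc S^2 = |S|^2 := (sq_abs S).symm
        _ ≤ (ω * Real.sqrt m)^2 := pow_le_pow_left₀ (abs_nonneg _) h 2
        _ = ω^2 * (Real.sqrt m)^2 := by ring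
        _ = ω^2 * m := by rw [Real.sq_sqrt hm0.le]
    have hsum_x : ∑ t ∈ Finset.Ioc s e, x t = m * f (s+1) + S := by
      have hxx : ∀ t ∈ Finset.Ioc s e, x t = f (s+1) + ε t := by
        intro t ht; rw [hx t, hfc t ht]
      rw [Finset.sum_congr rfl hxx, Finset.sum_add_distrib, Finset.sum_const,
          nsmul_eq_mul, hcardJ, ← hS]
    have hmean : segMean x s e = f (s+1) + S / m := by
      simp only [segMean]
      rw [← hm, hsum_x]
      field_simp
    set d := segMean x s e - c with hd
    have hpt : ∀ t ∈ Finset.Ioc s e, x t - c = (ε t - S/m) + d := by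
      intro t ht
      rw [hx t, hfc t ht, hd, hmean]
      ring
    have hzero : ∑ t ∈ Finset.Ioc s e, (ε t - S/m) = 0 := by
      rw [Finset.sum_sub_distrib, Finset.sum_const, nsmul_eq_mul, hcardJ, ← hS]
      field_simp
      ring
    have hexp : ∑ t ∈ Finset.Ioc s e, (x t - segMean x (lbd A t) (ubd A n t))^2
        = (∑ t ∈ Finset.Ioc s e, (ε t - S/m)^2)
          + (2*d) * (∑ t ∈ Finset.Ioc s e, (ε t - S/m))
          + (((Finset.Ioc s e).card : ℝ)) * d^2 := by
      have e1 : ∀ t ∈ Finset.Ioc s e, (x t - segMean x (lbd A t) (ubd A n t))^2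
          = (ε t - S/m)^2 + (2*d)*(ε t - S/m) + d^2 := by
        intro t ht
        rw [hconst t ht, hpt t ht]
        ring
      rw [Finset.sum_congr rfl e1, Finset.sum_add_distrib, Finset.sum_add_distrib,
          ← Finset.mul_sum, Finset.sum_const, nsmul_eq_mul]
    have heps : ∑ t ∈ Finset.Ioc s e, (ε t - S/m)^2
        = (∑ t ∈ Finset.Ioc s e, ε t ^ 2) - S^2/m := by
      have e2 : ∀ t ∈ Finset.Ioc s e, (ε t - S/m)^2
          = ε t ^ 2 - (2*S/m) * ε t + (S/m)^2 := by
        intro t ht; ring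
      rw [Finset.sum_congr rfl e2, Finset.sum_add_distrib, Finset.sum_sub_distrib,
          ← Finset.mul_sum, ← hS, Finset.sum_const, nsmul_eq_mul, hcardJ]
      field_simp
      ring
    rw [hexp, hzero, mul_zero, add_zero, heps, hcardJ]
    have hd2 : (0:ℝ) ≤ m * d^2 := by positivity
    have hSm : S^2/m ≤ ω^2 := by
      rw [div_le_iff₀ hm0]
      exact hS2
    nlinarith [hd2, hSm]
  -- assemble
  rw [RSS, sum_partition B n hn hBsub (fun t => (ε t) ^ 2), sum_partition B n hn hBsub]
  have hLcard : (((insert 0 B).card : ℝ)) = (B.card : ℝ) + 1 := by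
    rw [Finset.card_insert_of_notMem h0B]
    push_cast
    ring
  have hsplit : ∑ s ∈ insert 0 B, ((∑ t ∈ Finset.Ioc s (ubd B n (s+1)), ε t ^ 2) - ω ^ 2)
      = (∑ s ∈ insert 0 B, ∑ t ∈ Finset.Ioc s (ubd B n (s+1)), ε t ^ 2)
        - ((B.card : ℝ) + 1) * ω ^ 2 := by
    rw [Finset.sum_sub_distrib, Finset.sum_const, nsmul_eq_mul, hLcard]
  calc (∑ s ∈ insert 0 B, ∑ t ∈ Finset.Ioc s (ubd B n (s+1)), ε t ^ 2)
        - ((B.card : ℝ) + 1) * ω ^ 2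
      = ∑ s ∈ insert 0 B, ((∑ t ∈ Finset.Ioc s (ubd B n (s+1)), ε t ^ 2) - ω ^ 2) :=
        hsplit.symm
    _ ≤ _ := Finset.sum_le_sum hseg
end

section
/- (Explicit form of Proposition 6.1(b): near an undetectable change point, adding any candidate increases the Schwarz criterion.) Let n ≥ 1, ξ > 0, C' > 0, ω > 0, and let x_t = f_t + ε_t for t = 1, …, n, where ε satisfies the uniform interval bound with level ω. Let A ⊆ {1, …, n−1}, let c ∈ {1, …, n−1} \ A, and let c_- be the largest element of A ∪ {0} smaller than c and c_+ the smallest element of A ∪ {n} larger than c. Assume that for some integer θ with c_- < θ < c_+ and some reals μ, d one has f_t = μ + d · 𝟙{t > θ} for all t ∈ {c_-+1, …, c_+}, that C' n ≤ RSS(A ∪ {c}; x), and that ( |d| √( min(θ − c_-, c_+ − θ) ) + 2ω )² < 2 C' ξ. Then SC(A; x) < SC(A ∪ {c}; x). -/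
open Finset

lemma sum_eq_mean (x : ℕ → ℝ) (s e : ℕ) (h : s < e) :
    ∑ t ∈ Finset.Ioc s e, x t = ((e:ℝ) - s) * segMean x s e := by
  have hne : ((e:ℝ) - s) ≠ 0 := by
    have : (s:ℝ) < e := by exact_mod_cast h
    linarith
  unfold segMean
  field_simp

lemma var_decomp (x : ℕ → ℝ) (s e : ℕ) (h : s < e) (a : ℝ) :
    ∑ t ∈ Finset.Ioc s e, (x t - a)^2
      = ∑ t ∈ Finset.Ioc s e, (x t - segMean x s e)^2
        + ((e:ℝ) - s) * (segMean x s e - a)^2 := by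
  set m := segMean x s e with hm
  have hcard : ((Finset.Ioc s e).card : ℝ) = (e:ℝ) - s := by
    rw [Nat.card_Ioc]
    push_cast [Nat.cast_sub h.le]
    ring
  have key : ∀ t, (x t - a)^2
      = (x t - m)^2 + (2*(m-a))*(x t) + ((m-a)^2 - (2*(m-a))*m) := by
    intro t; ring
  simp only [key]
  rw [Finset.sum_add_distrib, Finset.sum_add_distrib, ← Finset.mul_sum,
    Finset.sum_const, sum_eq_mean x s e h, nsmul_eq_mul, hcard]
  ring
lemma rss_split (x : ℕ → ℝ) (s b e : ℕ) (hsb : s < b) (hbe : b < e) :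
    ∑ t ∈ Finset.Ioc s e, (x t - segMean x s e)^2
      = ∑ t ∈ Finset.Ioc s b, (x t - segMean x s b)^2
        + ∑ t ∈ Finset.Ioc b e, (x t - segMean x b e)^2
        + cusum x s b e ^ 2 := by
  have hse : s < e := hsb.trans hbe
  have hN1 : (0:ℝ) < (b:ℝ) - s := by
    have : (s:ℝ) < b := by exact_mod_cast hsb
    linarith
  have hN2 : (0:ℝ) < (e:ℝ) - b := by
    have : (b:ℝ) < e := by exact_mod_cast hbe
    linarith
  have hN : (0:ℝ) < (e:ℝ) - s := by linarith
  set m := segMean x s e with hmdef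
  set m1 := segMean x s b with hm1def
  set m2 := segMean x b e with hm2def
  have hsplit : Finset.Ioc s b ∪ Finset.Ioc b e = Finset.Ioc s e :=
    Finset.Ioc_union_Ioc_eq_Ioc hsb.le hbe.le
  have hdisj : Disjoint (Finset.Ioc s b) (Finset.Ioc b e) := by
    rw [Finset.disjoint_left]
    intro t h1 h2
    simp [Finset.mem_Ioc] at h1 h2
    omega
  have hsum : ∀ g : ℕ → ℝ, ∑ t ∈ Finset.Ioc s e, g t
      = ∑ t ∈ Finset.Ioc s b, g t + ∑ t ∈ Finset.Ioc b e, g t := by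
    intro g
    rw [← hsplit, Finset.sum_union hdisj]
  -- mean relation
  have hm : ((e:ℝ) - s) * m = ((b:ℝ) - s) * m1 + ((e:ℝ) - b) * m2 := by
    rw [← sum_eq_mean x s e hse, ← sum_eq_mean x s b hsb, ← sum_eq_mean x b e hbe]
    exact hsum x
  have h1 := var_decomp x s b hsb m
  have h2 := var_decomp x b e hbe m
  have hc : cusum x s b e ^ 2
      = (((b:ℝ) - s) * ((e:ℝ) - b) / ((e:ℝ) - s)) * (m1 - m2)^2 := by
    unfold cusum
    rw [mul_pow, Real.sq_sqrt (by positivity)]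
  rw [hsum (fun t => (x t - m)^2), h1, h2, hc]
  have halg : ((b:ℝ) - s) * (m1 - m)^2 + ((e:ℝ) - b) * (m2 - m)^2
      = (((b:ℝ) - s) * ((e:ℝ) - b) / ((e:ℝ) - s)) * (m1 - m2)^2 := by
    have hmm : m = (((b:ℝ) - s) * m1 + ((e:ℝ) - b) * m2) / ((e:ℝ) - s) := by
      field_simp
      linarith [hm]
    rw [hmm]
    have hEs : ((e:ℝ) - s) ≠ 0 := ne_of_gt hN
    field_simp
    ring
  linarith [halg]
lemma cusum_noise (ε : ℕ → ℝ) (n : ℕ) (ω : ℝ) (hε : UIB ε n ω) (hω : 0 < ω)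
    (s b e : ℕ) (hsb : s < b) (hbe : b < e) (hen : e ≤ n) :
    |cusum ε s b e| ≤ 2 * ω := by
  have hN1 : (0:ℝ) < (b:ℝ) - s := by
    have : (s:ℝ) < b := by exact_mod_cast hsb
    linarith
  have hN2 : (0:ℝ) < (e:ℝ) - b := by
    have : (b:ℝ) < e := by exact_mod_cast hbe
    linarith
  have h12 : (0:ℝ) < ((b:ℝ) - s) + ((e:ℝ) - b) := by linarith
  set N1 := (b:ℝ) - s
  set N2 := (e:ℝ) - b
  have hes : (e:ℝ) - s = N1 + N2 := by ring
  set r := N1 * N2 / ((e:ℝ) - s) with hr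
  have hrr : r = N1 * N2 / (N1 + N2) := by rw [hr, hes]
  have hrN1 : r ≤ N1 := by
    rw [hrr, div_le_iff₀ h12]
    nlinarith
  have hrN2 : r ≤ N2 := by
    rw [hrr, div_le_iff₀ h12]
    nlinarith
  have hS1 := hε s b hsb (hbe.le.trans hen)
  have hS2 := hε b e hbe hen
  have key : ∀ N : ℝ, 0 < N → r ≤ N → ∀ S : ℝ, |S| ≤ ω * Real.sqrt N →
      Real.sqrt r * (|S| / N) ≤ ω := by
    intro N hN hrN S hS
    calc Real.sqrt r * (|S| / N)
        ≤ Real.sqrt N * ((ω * Real.sqrt N) / N) := by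
          apply mul_le_mul (Real.sqrt_le_sqrt hrN)
            ((div_le_div_iff_of_pos_right hN).mpr hS)
            (by positivity) (Real.sqrt_nonneg _)
      _ = ω * (Real.sqrt N * Real.sqrt N) / N := by ring
      _ = ω * N / N := by rw [Real.mul_self_sqrt hN.le]
      _ = ω := by field_simp
  have habs : |cusum ε s b e| ≤ Real.sqrt r * (|∑ t ∈ Finset.Ioc s b, ε t| / N1)
      + Real.sqrt r * (|∑ t ∈ Finset.Ioc b e, ε t| / N2) := by
    unfold cusum segMean
    rw [abs_mul, abs_of_nonneg (Real.sqrt_nonneg _), ← mul_add]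
    apply mul_le_mul_of_nonneg_left _ (Real.sqrt_nonneg _)
    calc |(∑ t ∈ Finset.Ioc s b, ε t) / ((b:ℝ) - s) - (∑ t ∈ Finset.Ioc b e, ε t) / ((e:ℝ) - b)|
        ≤ |(∑ t ∈ Finset.Ioc s b, ε t) / ((b:ℝ) - s)| + |(∑ t ∈ Finset.Ioc b e, ε t) / ((e:ℝ) - b)| :=
          abs_sub _ _
      _ = |∑ t ∈ Finset.Ioc s b, ε t| / N1 + |∑ t ∈ Finset.Ioc b e, ε t| / N2 := by
          rw [abs_div, abs_div, abs_of_pos hN1, abs_of_pos hN2]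
  have t1 := key N1 hN1 hrN1 _ hS1
  have t2 := key N2 hN2 hrN2 _ hS2
  linarith

lemma sqrt_factor_bound (a N1 N2 X : ℝ) (h1 : 0 < N1) (h2 : 0 < N2) (ha : 0 ≤ a)
    (h : a^2 * N2 ≤ X * (N1 * (N1 + N2))) :
    Real.sqrt (N1 * N2 / (N1 + N2)) * (a / N1) ≤ Real.sqrt X := by
  have h12 : 0 < N1 + N2 := by linarith
  have e1 : Real.sqrt (N1*N2/(N1+N2)) * (a/N1)
      = Real.sqrt ((N1*N2/(N1+N2)) * (a/N1)^2) := by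
    rw [Real.sqrt_mul (by positivity), Real.sqrt_sq (by positivity)]
  rw [e1]
  apply Real.sqrt_le_sqrt
  have e2 : (N1*N2/(N1+N2)) * (a/N1)^2 = (a^2*N2) / (N1*(N1+N2)) := by
    field_simp
  rw [e2, div_le_iff₀ (by positivity)]
  exact h
lemma sum_step (d : ℝ) (θ s e : ℕ) :
    ∑ t ∈ Finset.Ioc s e, (if θ < t then d else 0)
      = ((e - max s θ : ℕ) : ℝ) * d := by
  classical
  rw [Finset.sum_ite, Finset.sum_const, Finset.sum_const, smul_zero, add_zero]
  have hfil : (Finset.Ioc s e).filter (fun t => θ < t) = Finset.Ioc (max s θ) e := by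
    ext t
    simp [Finset.mem_Ioc, Finset.mem_filter]
    omega
  rw [hfil, Nat.card_Ioc, nsmul_eq_mul]

lemma segMean_step (f : ℕ → ℝ) (μ d : ℝ) (θ s e : ℕ) (hse : s < e)
    (hf : ∀ t ∈ Finset.Ioc s e, f t = μ + (if θ < t then d else 0)) :
    segMean f s e = μ + ((e - max s θ : ℕ) : ℝ) / ((e:ℝ) - s) * d := by
  have hne : ((e:ℝ) - s) ≠ 0 := by
    have : (s:ℝ) < e := by exact_mod_cast hse
    linarith
  have hcard : ((Finset.Ioc s e).card : ℝ) = (e:ℝ) - s := by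
    rw [Nat.card_Ioc]; push_cast [Nat.cast_sub hse.le]; ring
  unfold segMean
  rw [Finset.sum_congr rfl hf, Finset.sum_add_distrib, Finset.sum_const, sum_step,
    nsmul_eq_mul, hcard]
  field_simp

lemma cusum_signal (f : ℕ → ℝ) (μ d : ℝ) (θ s b e : ℕ)
    (hsb : s < b) (hbe : b < e) (hsθ : s < θ) (hθe : θ < e)
    (hf : ∀ t ∈ Finset.Ioc s e, f t = μ + (if θ < t then d else 0)) :
    |cusum f s b e| ≤ |d| * Real.sqrt (min ((θ:ℝ) - s) ((e:ℝ) - θ)) := by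
  have hN1 : (0:ℝ) < (b:ℝ) - s := by
    have : (s:ℝ) < b := by exact_mod_cast hsb
    linarith
  have hN2 : (0:ℝ) < (e:ℝ) - b := by
    have : (b:ℝ) < e := by exact_mod_cast hbe
    linarith
  have hθs : (0:ℝ) < (θ:ℝ) - s := by
    have : (s:ℝ) < θ := by exact_mod_cast hsθ
    linarith
  have hθe' : (0:ℝ) < (e:ℝ) - θ := by
    have : (θ:ℝ) < e := by exact_mod_cast hθe
    linarith
  have hf1 : ∀ t ∈ Finset.Ioc s b, f t = μ + (if θ < t then d else 0) := by
    intro t ht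
    apply hf
    simp [Finset.mem_Ioc] at ht ⊢
    omega
  have hf2 : ∀ t ∈ Finset.Ioc b e, f t = μ + (if θ < t then d else 0) := by
    intro t ht
    apply hf
    simp [Finset.mem_Ioc] at ht ⊢
    omega
  have hm1 := segMean_step f μ d θ s b hsb hf1
  have hm2 := segMean_step f μ d θ b e hbe hf2
  have hes : (e:ℝ) - s = ((b:ℝ) - s) + ((e:ℝ) - b) := by ring
  rcases le_or_gt θ b with hθb | hbθ
  · -- θ ≤ b
    have hθb' : (θ:ℝ) ≤ b := by exact_mod_cast hθb
    have e1 : ((b - max s θ : ℕ) : ℝ) = (b:ℝ) - θ := by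
      rw [max_eq_right hsθ.le]
      push_cast [Nat.cast_sub hθb]
      ring
    have e2 : ((e - max b θ : ℕ) : ℝ) = (e:ℝ) - b := by
      rw [max_eq_left hθb]
      push_cast [Nat.cast_sub hbe.le]
      ring
    have hdiff : segMean f s b - segMean f b e
        = -(d * (((θ:ℝ) - s) / ((b:ℝ) - s))) := by
      rw [hm1, hm2, e1, e2]
      field_simp
      ring
    have hb1 : |cusum f s b e|
        = Real.sqrt (((b:ℝ)-s) * ((e:ℝ)-b) / (((b:ℝ)-s) + ((e:ℝ)-b)))
            * ((|d| * ((θ:ℝ) - s)) / ((b:ℝ)-s)) := by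
      unfold cusum
      rw [hdiff, hes, abs_mul, abs_of_nonneg (Real.sqrt_nonneg _), abs_neg, abs_mul,
        abs_div, abs_of_pos hθs, abs_of_pos hN1]
      ring
    rw [hb1]
    have hbound : (|d| * ((θ:ℝ) - s))^2 * ((e:ℝ)-b)
        ≤ (d^2 * min ((θ:ℝ) - s) ((e:ℝ) - θ)) * (((b:ℝ)-s) * (((b:ℝ)-s) + ((e:ℝ)-b))) := by
      have h0 : (|d| * ((θ:ℝ) - s))^2 = d^2 * (((θ:ℝ)-s) * ((θ:ℝ)-s)) := by
        rw [mul_pow, sq_abs]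
        ring
      rw [h0]
      have k1 : (θ:ℝ)-s ≤ (b:ℝ)-s := by linarith
      have k2 : (θ:ℝ)-s ≤ ((b:ℝ)-s) + ((e:ℝ)-b) := by linarith
      have k3 : (e:ℝ)-b ≤ (e:ℝ)-θ := by linarith
      have k4 : (e:ℝ)-b ≤ ((b:ℝ)-s) + ((e:ℝ)-b) := by linarith
      rcases min_cases ((θ:ℝ) - s) ((e:ℝ) - θ) with ⟨hmin, _⟩ | ⟨hmin, hle⟩
      · rw [hmin]
        have h1 : (((θ:ℝ)-s) * ((e:ℝ)-b)) ≤ (((b:ℝ)-s) * (((b:ℝ)-s) + ((e:ℝ)-b))) :=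
          mul_le_mul k1 k4 hN2.le hN1.le
        linarith [mul_le_mul_of_nonneg_left h1 (mul_nonneg (sq_nonneg d) hθs.le)]
      · rw [hmin]
        have h1 : ((((θ:ℝ)-s) * ((θ:ℝ)-s)) * ((e:ℝ)-b))
            ≤ ((((b:ℝ)-s) * (((b:ℝ)-s) + ((e:ℝ)-b))) * ((e:ℝ)-θ)) :=
          mul_le_mul (mul_le_mul k1 k2 hθs.le hN1.le) k3 hN2.le
            (by positivity)
        linarith [mul_le_mul_of_nonneg_left h1 (sq_nonneg d)]
    calc Real.sqrt (((b:ℝ)-s) * ((e:ℝ)-b) / (((b:ℝ)-s) + ((e:ℝ)-b)))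
            * ((|d| * ((θ:ℝ) - s)) / ((b:ℝ)-s))
        ≤ Real.sqrt (d^2 * min ((θ:ℝ) - s) ((e:ℝ) - θ)) :=
          sqrt_factor_bound _ _ _ _ hN1 hN2 (by positivity) hbound
      _ = |d| * Real.sqrt (min ((θ:ℝ) - s) ((e:ℝ) - θ)) := by
          rw [Real.sqrt_mul (sq_nonneg d), Real.sqrt_sq_eq_abs]
  · -- b < θ
    have hbθ' : (b:ℝ) ≤ θ := by exact_mod_cast hbθ.le
    have e1 : ((b - max s θ : ℕ) : ℝ) = 0 := by
      have : b - max s θ = 0 := by omega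
      rw [this]
      norm_num
    have e2 : ((e - max b θ : ℕ) : ℝ) = (e:ℝ) - θ := by
      rw [max_eq_right hbθ.le]
      push_cast [Nat.cast_sub hθe.le]
      ring
    have hdiff : segMean f s b - segMean f b e
        = -(d * (((e:ℝ) - θ) / ((e:ℝ) - b))) := by
      rw [hm1, hm2, e1, e2]
      ring
    have hb1 : |cusum f s b e|
        = Real.sqrt (((e:ℝ)-b) * ((b:ℝ)-s) / (((e:ℝ)-b) + ((b:ℝ)-s)))
            * ((|d| * ((e:ℝ) - θ)) / ((e:ℝ)-b)) := by
      unfold cusum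
      have hcomm : ((b:ℝ)-s) * ((e:ℝ)-b) / ((e:ℝ)-s)
          = ((e:ℝ)-b) * ((b:ℝ)-s) / (((e:ℝ)-b) + ((b:ℝ)-s)) := by
        rw [hes]
        ring
      rw [hdiff, hcomm, abs_mul, abs_of_nonneg (Real.sqrt_nonneg _), abs_neg, abs_mul,
        abs_div, abs_of_pos hθe', abs_of_pos hN2]
      ring
    rw [hb1]
    have hbound : (|d| * ((e:ℝ) - θ))^2 * ((b:ℝ)-s)
        ≤ (d^2 * min ((θ:ℝ) - s) ((e:ℝ) - θ)) * (((e:ℝ)-b) * (((e:ℝ)-b) + ((b:ℝ)-s))) := by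
      have h0 : (|d| * ((e:ℝ) - θ))^2 = d^2 * (((e:ℝ)-θ) * ((e:ℝ)-θ)) := by
        rw [mul_pow, sq_abs]
        ring
      rw [h0]
      have k1 : (e:ℝ)-θ ≤ (e:ℝ)-b := by linarith
      have k2 : (e:ℝ)-θ ≤ ((e:ℝ)-b) + ((b:ℝ)-s) := by linarith
      have k3 : (b:ℝ)-s ≤ (θ:ℝ)-s := by linarith
      have k4 : (b:ℝ)-s ≤ ((e:ℝ)-b) + ((b:ℝ)-s) := by linarith
      rcases min_cases ((θ:ℝ) - s) ((e:ℝ) - θ) with ⟨hmin, hle⟩ | ⟨hmin, _⟩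
      · rw [hmin]
        have h1 : ((((e:ℝ)-θ) * ((e:ℝ)-θ)) * ((b:ℝ)-s))
            ≤ ((((e:ℝ)-b) * (((e:ℝ)-b) + ((b:ℝ)-s))) * ((θ:ℝ)-s)) :=
          mul_le_mul (mul_le_mul k1 k2 hθe'.le hN2.le) k3 hN1.le
            (by positivity)
        linarith [mul_le_mul_of_nonneg_left h1 (sq_nonneg d)]
      · rw [hmin]
        have h1 : (((e:ℝ)-θ) * ((b:ℝ)-s)) ≤ (((e:ℝ)-b) * (((e:ℝ)-b) + ((b:ℝ)-s))) :=
          mul_le_mul k1 k4 hN1.le hN2.le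
        linarith [mul_le_mul_of_nonneg_left h1 (mul_nonneg (sq_nonneg d) hθe'.le)]
    calc Real.sqrt (((e:ℝ)-b) * ((b:ℝ)-s) / (((e:ℝ)-b) + ((b:ℝ)-s)))
            * ((|d| * ((e:ℝ) - θ)) / ((e:ℝ)-b))
        ≤ Real.sqrt (d^2 * min ((θ:ℝ) - s) ((e:ℝ) - θ)) :=
          sqrt_factor_bound _ _ _ _ hN2 hN1 (by positivity) hbound
      _ = |d| * Real.sqrt (min ((θ:ℝ) - s) ((e:ℝ) - θ)) := by
          rw [Real.sqrt_mul (sq_nonneg d), Real.sqrt_sq_eq_abs]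
lemma lbd_eq {A : Finset ℕ} {t m : ℕ} (hm : m ∈ insert 0 A) (hmt : m < t)
    (hmax : ∀ a ∈ insert 0 A, a < t → a ≤ m) : lbd A t = m := by
  unfold lbd
  have h1 : ((insert 0 A).filter (fun a => a < t)).max = (m : WithBot ℕ) := by
    apply le_antisymm
    · apply Finset.max_le
      intro a ha
      rw [Finset.mem_filter] at ha
      exact WithBot.coe_le_coe.mpr (hmax a ha.1 ha.2)
    · exact Finset.le_max (Finset.mem_filter.mpr ⟨hm, hmt⟩)
  rw [h1]
  rfl

lemma ubd_eq {A : Finset ℕ} {n t m : ℕ} (hm : m ∈ insert n A) (hmt : t ≤ m)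
    (hmin : ∀ a ∈ insert n A, t ≤ a → m ≤ a) : ubd A n t = m := by
  unfold ubd
  have h1 : ((insert n A).filter (fun a => t ≤ a)).min = (m : WithTop ℕ) := by
    apply le_antisymm
    · exact Finset.min_le (Finset.mem_filter.mpr ⟨hm, hmt⟩)
    · apply Finset.le_min
      intro a ha
      rw [Finset.mem_filter] at ha
      exact WithTop.coe_le_coe.mpr (hmin a ha.1 ha.2)
  rw [h1]
  rfl

lemma lbd_insert_ge {A : Finset ℕ} {c t : ℕ} (h : t ≤ c) :
    lbd (insert c A) t = lbd A t := by
  unfold lbd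
  congr 1
  rw [Finset.insert_comm, Finset.filter_insert, if_neg (by omega)]

lemma lbd_insert_dom {A : Finset ℕ} {c t a : ℕ} (ha : a ∈ insert 0 A)
    (hca : c ≤ a) (hat : a < t) : lbd (insert c A) t = lbd A t := by
  unfold lbd
  rw [Finset.insert_comm, Finset.filter_insert, if_pos (by omega : c < t)]
  congr 1
  rw [Finset.max_insert]
  have h1 : (c : WithBot ℕ) ≤ (a : WithBot ℕ) := WithBot.coe_le_coe.mpr hca
  have h2 : (a : WithBot ℕ) ≤ ((insert 0 A).filter (fun x => x < t)).max :=
    Finset.le_max (Finset.mem_filter.mpr ⟨ha, hat⟩)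
  exact max_eq_right (h1.trans h2)

lemma ubd_insert_lt {A : Finset ℕ} {n c t : ℕ} (h : c < t) :
    ubd (insert c A) n t = ubd A n t := by
  unfold ubd
  congr 1
  rw [Finset.insert_comm, Finset.filter_insert, if_neg (by omega)]

lemma ubd_insert_dom {A : Finset ℕ} {n c t a : ℕ} (ha : a ∈ insert n A)
    (hac : a ≤ c) (hta : t ≤ a) : ubd (insert c A) n t = ubd A n t := by
  unfold ubd
  rw [Finset.insert_comm, Finset.filter_insert, if_pos (by omega : t ≤ c)]
  congr 1
  rw [Finset.min_insert]
  have h1 : ((insert n A).filter (fun x => t ≤ x)).min ≤ (a : WithTop ℕ) :=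
    Finset.min_le (Finset.mem_filter.mpr ⟨ha, hta⟩)
  have h2 : (a : WithTop ℕ) ≤ (c : WithTop ℕ) := WithTop.coe_le_coe.mpr hac
  exact min_eq_right (h1.trans h2)

/-- Explicit form of Proposition 6.1(b): near an undetectable change point `θ`
of size `d` in the local window `(c_-, c_+]`, adding any candidate `c ∉ A`
increases the Schwarz criterion, provided `C' n ≤ RSS(A ∪ {c}; x)` and
`(|d| √(min(θ − c_-, c_+ − θ)) + 2ω)² < 2 C' ξ`. -/
theorem sc_increases_undetectable_change
    (n : ℕ) (hn : 1 ≤ n) (ξ C' ω : ℝ) (hξ : 0 < ξ) (hC' : 0 < C') (hω : 0 < ω)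
    (f ε x : ℕ → ℝ) (hx : ∀ t, x t = f t + ε t) (hε : UIB ε n ω)
    (A : Finset ℕ) (hA : A ⊆ Finset.Icc 1 (n - 1))
    (c : ℕ) (hc : c ∈ Finset.Icc 1 (n - 1)) (hcA : c ∉ A)
    (cm cp : ℕ)
    (hcm1 : cm < c) (hcm2 : cm ∈ insert 0 A)
    (hcm3 : ∀ a ∈ insert 0 A, a < c → a ≤ cm)
    (hcp1 : c < cp) (hcp2 : cp ∈ insert n A)
    (hcp3 : ∀ a ∈ insert n A, c < a → cp ≤ a)
    (θ : ℕ) (hθ1 : cm < θ) (hθ2 : θ < cp)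
    (μ d : ℝ)
    (hfθ : ∀ t ∈ Finset.Ioc cm cp, f t = μ + (if θ < t then d else 0))
    (hRSS : C' * n ≤ RSS x n (insert c A))
    (hd : (|d| * Real.sqrt (min ((θ : ℝ) - cm) ((cp : ℝ) - θ)) + 2 * ω) ^ 2
      < 2 * C' * ξ) :
    SC x n ξ A < SC x n ξ (insert c A) := by
  classical
  -- basic arithmetic facts
  rw [Finset.mem_Icc] at hc
  have hc1 : 1 ≤ c := hc.1
  have hcn : c < n := by omega
  have hcpn : cp ≤ n := by
    rcases Finset.mem_insert.mp hcp2 with h | h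
    · omega
    · have := Finset.mem_Icc.mp (hA h)
      omega
  have hnR : (0:ℝ) < n := by exact_mod_cast hn
  -- the window is inside [1, n]
  have hsub : Finset.Ioc cm cp ⊆ Finset.Icc 1 n := by
    intro t ht
    rw [Finset.mem_Ioc] at ht
    rw [Finset.mem_Icc]
    omega
  -- segment boundary identifications
  have hlbdA : ∀ t, cm < t → t ≤ cp → lbd A t = cm := by
    intro t h1 h2
    apply lbd_eq hcm2 h1
    intro a ha hat
    by_cases hac : a < c
    · exact hcm3 a ha hac
    · exfalso
      have haA : a ∈ A := by
        rcases Finset.mem_insert.mp ha with h | h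
        · omega
        · exact h
      have hca : c < a := by
        rcases Nat.lt_or_ge c a with h | h
        · exact h
        · exfalso
          have : a = c := by omega
          rw [this] at haA
          exact hcA haA
      have := hcp3 a (Finset.mem_insert_of_mem haA) hca
      omega
  have hubdA : ∀ t, cm < t → t ≤ cp → ubd A n t = cp := by
    intro t h1 h2
    apply ubd_eq hcp2 h2
    intro a ha hta
    by_cases hca : c < a
    · exact hcp3 a ha hca
    · exfalso
      rcases Finset.mem_insert.mp ha with h | h
      · omega
      · have hacm : a ≤ cm := by
          apply hcm3 a (Finset.mem_insert_of_mem h)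
          rcases Nat.lt_or_ge a c with h' | h'
          · exact h'
          · exfalso
            have : a = c := by omega
            rw [this] at h
            exact hcA h
        omega
  have hcomm0 : insert 0 (insert c A) = insert c (insert 0 A) := Finset.insert_comm _ _ _
  have hcommn : insert n (insert c A) = insert c (insert n A) := Finset.insert_comm _ _ _
  have hlbd1 : ∀ t, cm < t → t ≤ c → lbd (insert c A) t = cm := by
    intro t h1 h2
    apply lbd_eq (A := insert c A)
    · rw [hcomm0]
      exact Finset.mem_insert_of_mem hcm2
    · exact h1
    · intro a ha hat
      rw [hcomm0] at ha
      rcases Finset.mem_insert.mp ha with h | h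
      · omega
      · exact hcm3 a h (by omega)
  have hubd1 : ∀ t, cm < t → t ≤ c → ubd (insert c A) n t = c := by
    intro t h1 h2
    apply ubd_eq (A := insert c A)
    · rw [hcommn]
      exact Finset.mem_insert_self c _
    · exact h2
    · intro a ha hta
      rw [hcommn] at ha
      rcases Finset.mem_insert.mp ha with h | h
      · omega
      · rcases Finset.mem_insert.mp h with h' | h'
        · omega
        · rcases Nat.lt_or_ge a c with h'' | h''
          · exfalso
            have := hcm3 a (Finset.mem_insert_of_mem h') h''
            omega
          · exact h''
  have hlbd2 : ∀ t, c < t → t ≤ cp → lbd (insert c A) t = c := by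
    intro t h1 h2
    apply lbd_eq (A := insert c A)
    · rw [hcomm0]
      exact Finset.mem_insert_self c _
    · exact h1
    · intro a ha hat
      rw [hcomm0] at ha
      rcases Finset.mem_insert.mp ha with h | h
      · omega
      · rcases Finset.mem_insert.mp h with h' | h'
        · omega
        · rcases Nat.lt_or_ge c a with h'' | h''
          · exfalso
            have := hcp3 a (Finset.mem_insert_of_mem h') h''
            omega
          · exact h''
  have hubd2 : ∀ t, c < t → t ≤ cp → ubd (insert c A) n t = cp := by
    intro t h1 h2
    apply ubd_eq (A := insert c A)
    · rw [hcommn]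
      exact Finset.mem_insert_of_mem hcp2
    · exact h2
    · intro a ha hta
      rw [hcommn] at ha
      rcases Finset.mem_insert.mp ha with h | h
      · omega
      · exact hcp3 a h (by omega)
  -- outside the window nothing changes
  have hout : ∀ t ∈ Finset.Icc 1 n \ Finset.Ioc cm cp,
      (x t - segMean x (lbd (insert c A) t) (ubd (insert c A) n t)) ^ 2
        = (x t - segMean x (lbd A t) (ubd A n t)) ^ 2 := by
    intro t ht
    rw [Finset.mem_sdiff, Finset.mem_Icc, Finset.mem_Ioc] at ht
    obtain ⟨⟨ht1, ht2⟩, ht3⟩ := ht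
    rcases Nat.lt_or_ge cm t with hl | hl
    · -- then cp < t
      have hcpt : cp < t := by omega
      have hcpA : cp ∈ A := by
        rcases Finset.mem_insert.mp hcp2 with h | h
        · omega
        · exact h
      rw [lbd_insert_dom (Finset.mem_insert_of_mem hcpA) hcp1.le hcpt,
        ubd_insert_lt (by omega : c < t)]
    · -- t ≤ cm
      have hcmA : cm ∈ A := by
        rcases Finset.mem_insert.mp hcm2 with h | h
        · omega
        · exact h
      rw [lbd_insert_ge (by omega : t ≤ c),
        ubd_insert_dom (Finset.mem_insert_of_mem hcmA) hcm1.le hl]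
  -- RSS decomposition
  have hsplitIoc : Finset.Ioc cm c ∪ Finset.Ioc c cp = Finset.Ioc cm cp :=
    Finset.Ioc_union_Ioc_eq_Ioc hcm1.le hcp1.le
  have hdisj : Disjoint (Finset.Ioc cm c) (Finset.Ioc c cp) := by
    rw [Finset.disjoint_left]
    intro t h1 h2
    rw [Finset.mem_Ioc] at h1 h2
    omega
  have key : RSS x n A = RSS x n (insert c A) + cusum x cm c cp ^ 2 := by
    unfold RSS
    rw [← Finset.sum_sdiff hsub, ← Finset.sum_sdiff hsub, Finset.sum_congr rfl hout]
    have hA2 : ∑ t ∈ Finset.Ioc cm cp, (x t - segMean x (lbd A t) (ubd A n t)) ^ 2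
        = ∑ t ∈ Finset.Ioc cm cp, (x t - segMean x cm cp) ^ 2 := by
      apply Finset.sum_congr rfl
      intro t ht
      rw [Finset.mem_Ioc] at ht
      rw [hlbdA t ht.1 ht.2, hubdA t ht.1 ht.2]
    have hAc2 : ∑ t ∈ Finset.Ioc cm cp,
          (x t - segMean x (lbd (insert c A) t) (ubd (insert c A) n t)) ^ 2
        = ∑ t ∈ Finset.Ioc cm c, (x t - segMean x cm c) ^ 2
          + ∑ t ∈ Finset.Ioc c cp, (x t - segMean x c cp) ^ 2 := by
      rw [← hsplitIoc, Finset.sum_union hdisj]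
      congr 1
      · apply Finset.sum_congr rfl
        intro t ht
        rw [Finset.mem_Ioc] at ht
        rw [hlbd1 t ht.1 ht.2, hubd1 t ht.1 ht.2]
      · apply Finset.sum_congr rfl
        intro t ht
        rw [Finset.mem_Ioc] at ht
        rw [hlbd2 t ht.1 ht.2, hubd2 t ht.1 ht.2]
    rw [hA2, hAc2, rss_split x cm c cp hcm1 hcp1]
    ring
  -- bound the cusum
  have hseg : ∀ s e : ℕ, segMean x s e = segMean f s e + segMean ε s e := by
    intro s e
    unfold segMean
    rw [show (∑ t ∈ Finset.Ioc s e, x t)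
        = ∑ t ∈ Finset.Ioc s e, (f t + ε t) from Finset.sum_congr rfl (fun t _ => hx t),
      Finset.sum_add_distrib, add_div]
  have hcx : cusum x cm c cp = cusum f cm c cp + cusum ε cm c cp := by
    unfold cusum
    rw [hseg cm c, hseg c cp]
    ring
  have hB := cusum_signal f μ d θ cm c cp hcm1 hcp1 hθ1 hθ2 hfθ
  have hNo := cusum_noise ε n ω hε hω cm c cp hcm1 hcp1 hcpn
  have habs : |cusum x cm c cp|
      ≤ |d| * Real.sqrt (min ((θ:ℝ) - cm) ((cp:ℝ) - θ)) + 2 * ω := by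
    rw [hcx]
    calc |cusum f cm c cp + cusum ε cm c cp|
        ≤ |cusum f cm c cp| + |cusum ε cm c cp| := abs_add_le _ _
      _ ≤ _ := add_le_add hB hNo
  have hK : cusum x cm c cp ^ 2 < 2 * C' * ξ := by
    have h1 : cusum x cm c cp ^ 2
        ≤ (|d| * Real.sqrt (min ((θ:ℝ) - cm) ((cp:ℝ) - θ)) + 2 * ω) ^ 2 := by
      rw [← sq_abs]
      exact pow_le_pow_left₀ (abs_nonneg _) habs 2
    linarith
  -- final comparison
  set R := RSS x n (insert c A) with hRdef
  set K := cusum x cm c cp ^ 2 with hKdef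
  have hK0 : 0 ≤ K := sq_nonneg _
  have hRpos : 0 < R := lt_of_lt_of_le (by positivity) hRSS
  have hRKpos : 0 < R + K := by linarith
  unfold SC
  rw [key, Finset.card_insert_of_notMem hcA]
  push_cast
  have hlog : Real.log ((R + K) / n) - Real.log (R / n)
      = Real.log ((R + K) / R) := by
    rw [Real.log_div hRKpos.ne' hnR.ne', Real.log_div hRpos.ne' hnR.ne',
      Real.log_div hRKpos.ne' hRpos.ne']
    ring
  have hlog2 : Real.log ((R + K) / R) ≤ K / R := by
    have := Real.log_le_sub_one_of_pos (by positivity : 0 < (R + K) / R)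
    have heq : (R + K) / R - 1 = K / R := by
      field_simp
      ring
    linarith [this, heq.le, heq.ge]
  have hmain : ((n:ℝ) / 2) * (Real.log ((R + K) / n) - Real.log (R / n)) < ξ := by
    rw [hlog]
    have h1 : ((n:ℝ) / 2) * Real.log ((R + K) / R) ≤ ((n:ℝ) / 2) * (K / R) :=
      mul_le_mul_of_nonneg_left hlog2 (by positivity)
    have h2 : ((n:ℝ) / 2) * (K / R) < ξ := by
      rw [div_mul_div_comm, div_lt_iff₀ (by positivity : (0:ℝ) < 2 * R)]
      have h3 : (n:ℝ) * K < (n:ℝ) * (2 * C' * ξ) :=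
        (mul_lt_mul_iff_right₀ hnR).mpr hK
      have h4 : 2 * ξ * (C' * n) ≤ 2 * ξ * R := by
        apply mul_le_mul_of_nonneg_left hRSS
        positivity
      nlinarith
    linarith
  nlinarith [hmain]
end
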